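/- arXiv:1711.08086 — 2 statements merged into one kernel-verified Lean document; each statement's English description precedes it below -/
import Mathlib

section
/- (Diagonal band estimate.) Let σ, ω be Radon measures on ℝ, let r ≥ 0 be an integer, and let (T, T*) be a formal operator pair such that |⟨T(σ·h_I^σ), h_J^ω⟩_ω| ≤ C₃ for all I, J ∈ 𝒟 with 2^{-r}|I| ≤ |J| ≤ 2^r|I| and J ⊆ I^{(r)}. Then for every f ∈ L²(σ) and g ∈ L²(ω): Σ_{(I,J)} |⟨f, h_I^σ⟩_σ|·|⟨g, h_J^ω⟩_ω|·|⟨T(σ·h_I^σ), h_J^ω⟩_ω| ≤ (2^{2r+1} − 1)·C₃·‖f‖_{L²(σ)}·‖g‖_{L²(ω)}, where the sum runs over all pairs (I, J) ∈ 𝒟 × 𝒟 with 2^{-r}|I| ≤ |J| ≤ 2^r|I| and J ⊆ I^{(r)}. -/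
open MeasureTheory Set Filter
open scoped Classical

noncomputable section

/-- The dyadic interval `[2^k m, 2^k (m+1))`. -/
def dy (k m : ℤ) : Set ℝ := Set.Ico ((2:ℝ)^k * m) ((2:ℝ)^k * (m+1))

/-- The left half of the dyadic interval. -/
def dyL (k m : ℤ) : Set ℝ := dy (k-1) (2*m)

/-- The right half of the dyadic interval. -/
def dyR (k m : ℤ) : Set ℝ := dy (k-1) (2*m+1)

/-- `I^{(r)}`: the dyadic interval of length `2^r |I|` containing `I = dy k m`. -/
def dyUp (r : ℕ) (k m : ℤ) : Set ℝ := dy (k + r) (Int.fdiv m (2^r))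

/-- The pairing `⟨f, g⟩_μ = ∫ f g dμ`. -/
def ip (μ : Measure ℝ) (f g : ℝ → ℝ) : ℝ := ∫ x, f x * g x ∂μ

/-- The `L²(μ)` norm. -/
def nrm (μ : Measure ℝ) (f : ℝ → ℝ) : ℝ := Real.sqrt (∫ x, f x ^ 2 ∂μ)

/-- The average `⟨f⟩_s^μ = μ(s)⁻¹ ∫_s f dμ`. -/
def avg (μ : Measure ℝ) (s : Set ℝ) (f : ℝ → ℝ) : ℝ := (μ s).toReal⁻¹ * ∫ x in s, f x ∂μ

/-- The weight-adapted Haar function `h_I^σ` for `I = dy k m`. -/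
def haarW (σ : Measure ℝ) (k m : ℤ) : ℝ → ℝ :=
  if σ (dyL k m) ≠ 0 ∧ σ (dyR k m) ≠ 0 then
    fun x =>
      Real.sqrt ((σ (dyL k m)).toReal / ((σ (dy k m)).toReal * (σ (dyR k m)).toReal))
          * (dyR k m).indicator 1 x
        - Real.sqrt ((σ (dyR k m)).toReal / ((σ (dy k m)).toReal * (σ (dyL k m)).toReal))
          * (dyL k m).indicator 1 x
  else 0

/-- The martingale difference `Δ_I^σ f = ⟨f, h_I^σ⟩_σ · h_I^σ`. -/
def mdiff (σ : Measure ℝ) (k m : ℤ) (f : ℝ → ℝ) : ℝ → ℝ :=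
  fun x => ip σ f (haarW σ k m) * haarW σ k m x

/-- `𝒮`: the linear span of the indicators of dyadic intervals. -/
def simpleSpan : Submodule ℝ (ℝ → ℝ) :=
  Submodule.span ℝ {f : ℝ → ℝ | ∃ k m : ℤ, f = (dy k m).indicator 1}

/-- A formal operator pair `(T, T*)`: linear maps with `T` sending `𝒮_σ` into `L²(ω)`,
`T*` sending `𝒮_ω` into `L²(σ)`, satisfying the duality relation
`⟨T(σf), g⟩_ω = ⟨f, T*(ωg)⟩_σ` on the spans of indicators.  We write `P.T f` for `T(σf)`
and `P.Ts g` for `T*(ωg)`. -/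
structure FormalPair (σ ω : Measure ℝ) where
  T : (ℝ → ℝ) →ₗ[ℝ] (ℝ → ℝ)
  Ts : (ℝ → ℝ) →ₗ[ℝ] (ℝ → ℝ)
  memT : ∀ f ∈ simpleSpan, MemLp (T f) 2 ω
  memTs : ∀ g ∈ simpleSpan, MemLp (Ts g) 2 σ
  adj : ∀ f ∈ simpleSpan, ∀ g ∈ simpleSpan, ∫ x, T f x * g x ∂ω = ∫ x, f x * Ts g x ∂σ

/-- `(T, T*)` is essentially well localized with parameter `r`. -/
def EWL {σ ω : Measure ℝ} (P : FormalPair σ ω) (r : ℕ) : Prop :=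
  ∀ k m : ℤ,
    (∀ᵐ x ∂ω, x ∉ dyUp r k m → P.T (haarW σ k m) x = 0) ∧
    (∀ᵐ x ∂σ, x ∉ dyUp r k m → P.Ts (haarW ω k m) x = 0)

/-!
Bound each pairing by `C₃`; what is left is a bilinear form in the Haar coefficients of `f` and
`g` with a `0/1` matrix. The Haar functions with both halves charged are orthonormal (each has
mean zero and is constant on the halves of its interval, hence on every smaller dyadic interval),
so by Bessel the coefficients of `f` and `g` have `ℓ²` norms at most `‖f‖` and `‖g‖`. In the band,
`I` is paired with the `2^t` dyadic intervals `t` generations below `I^{(r)}`, `0 ≤ t ≤ 2r`, i.e.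
with at most `2^{2r+1} - 1` intervals `J`, and each `J` with at most `(2r+1)·2^r` intervals `I`.
Cauchy–Schwarz then gives the constant `√((2^{2r+1} - 1)(2r+1)2^r) ≤ 2^{2r+1} - 1`.
-/

lemma mem_dy_iff {k m : ℤ} {x : ℝ} : x ∈ dy k m ↔ ⌊x / 2 ^ k⌋ = m := by
  have h : (0:ℝ) < 2 ^ k := by positivity
  rw [Int.floor_eq_iff, dy, mem_Ico, le_div_iff₀ h, div_lt_iff₀ h, mul_comm (m : ℝ),
    mul_comm _ (2 ^ k)]

lemma floor_div_two_zpow_add (x : ℝ) (k : ℤ) (t : ℕ) :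
    ⌊x / 2 ^ (k + t)⌋ = ⌊x / 2 ^ k⌋.fdiv (2 ^ t) := by
  rw [Int.fdiv_eq_ediv_of_nonneg _ (by positivity), zpow_add₀ two_ne_zero, ← div_div,
    zpow_natCast]
  exact_mod_cast Int.floor_div_natCast (x / 2 ^ k) (2 ^ t)

lemma dy_subset_dy_fdiv (k m : ℤ) (t : ℕ) : dy k m ⊆ dy (k + t) (m.fdiv (2 ^ t)) := by
  intro x hx
  rw [mem_dy_iff] at hx ⊢
  rw [floor_div_two_zpow_add, hx]

lemma mem_dy_self (k m : ℤ) : (2:ℝ) ^ k * m ∈ dy k m := by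
  rw [mem_dy_iff, mul_div_cancel_left₀ _ (by positivity), Int.floor_intCast]

lemma fdiv_eq_of_dy_subset {l u c : ℤ} {t : ℕ} (h : dy l u ⊆ dy (l + t) c) :
    u.fdiv (2 ^ t) = c := by
  have hx := mem_dy_self l u
  rw [← mem_dy_iff.mp (h hx), ← mem_dy_iff.mp (dy_subset_dy_fdiv l u t hx)]

lemma mem_Ico_of_fdiv_eq {u c : ℤ} {t : ℕ} (h : u.fdiv (2 ^ t) = c) :
    u ∈ Finset.Ico (c * 2 ^ t) (c * 2 ^ t + 2 ^ t) := by
  have hpos : (0:ℤ) < 2 ^ t := by positivity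
  rw [Int.fdiv_eq_ediv_of_nonneg _ hpos.le] at h
  subst h
  rw [Finset.mem_Ico]
  constructor
  · exact Int.ediv_mul_le u hpos.ne'
  · have := Int.lt_ediv_add_one_mul_self u hpos
    linarith

lemma mem_dy_iff_fdiv_two {k m : ℤ} {x : ℝ} : x ∈ dy k m ↔ ⌊x / 2 ^ (k - 1)⌋.fdiv 2 = m := by
  have h := floor_div_two_zpow_add x (k - 1) 1
  rw [Nat.cast_one, sub_add_cancel, pow_one] at h
  rw [mem_dy_iff, h]

lemma dy_eq_dyL_union_dyR (k m : ℤ) : dy k m = dyL k m ∪ dyR k m := by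
  ext x
  rw [mem_union, dyL, dyR, mem_dy_iff_fdiv_two, mem_dy_iff, mem_dy_iff,
    Int.fdiv_eq_ediv_of_nonneg _ zero_le_two]
  omega

lemma disjoint_dyL_dyR (k m : ℤ) : Disjoint (dyL k m) (dyR k m) := by
  rw [Set.disjoint_left]
  intro x hL hR
  rw [dyL, mem_dy_iff] at hL
  rw [dyR, mem_dy_iff] at hR
  omega

lemma dyL_subset_dy (k m : ℤ) : dyL k m ⊆ dy k m := by
  rw [dy_eq_dyL_union_dyR]; exact subset_union_left

lemma dyR_subset_dy (k m : ℤ) : dyR k m ⊆ dy k m := by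
  rw [dy_eq_dyL_union_dyR]; exact subset_union_right

section StepFunction
variable {α : Type*} [MeasurableSpace α] {μ : Measure α} {S T : Set α}

lemma integral_const_mul_indicator_sub (hS : MeasurableSet S) (hT : MeasurableSet T)
    (hSμ : μ S ≠ ⊤) (hTμ : μ T ≠ ⊤) (a b : ℝ) :
    ∫ x, (a * S.indicator 1 x - b * T.indicator 1 x) ∂μ = a * μ.real S - b * μ.real T := by
  have hint : ∀ {U : Set α}, MeasurableSet U → μ U ≠ ⊤ → Integrable (U.indicator (1 : α → ℝ)) μ :=
    fun hU hUμ => (integrable_indicator_iff hU).2 (integrableOn_const hUμ)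
  rw [integral_sub ((hint hS hSμ).const_mul a) ((hint hT hTμ).const_mul b), integral_const_mul,
    integral_const_mul, integral_indicator_one hS, integral_indicator_one hT]

lemma integral_sq_const_mul_indicator_sub (hST : Disjoint S T) (hS : MeasurableSet S)
    (hT : MeasurableSet T) (hSμ : μ S ≠ ⊤) (hTμ : μ T ≠ ⊤) (a b : ℝ) :
    ∫ x, (a * S.indicator 1 x - b * T.indicator 1 x) ^ 2 ∂μ
      = a ^ 2 * μ.real S + b ^ 2 * μ.real T := by
  have hpt : ∀ x, (a * S.indicator 1 x - b * T.indicator 1 x) ^ 2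
      = a ^ 2 * S.indicator 1 x - (-b ^ 2) * T.indicator 1 x := by
    intro x
    by_cases hxS : x ∈ S
    · simp [hxS, Set.disjoint_left.mp hST hxS]
    · by_cases hxT : x ∈ T <;> simp [hxS, hxT]
  simp only [hpt]
  rw [integral_const_mul_indicator_sub hS hT hSμ hTμ]
  ring

end StepFunction

lemma haar_coeff_mul_eq {L R : ℝ} (hL : 0 < L) (hR : 0 < R) :
    √(L / ((L + R) * R)) * R = √(R / ((L + R) * L)) * L := by
  rw [← sq_eq_sq₀ (by positivity) (by positivity), mul_pow, mul_pow,
    Real.sq_sqrt (by positivity), Real.sq_sqrt (by positivity)]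
  field_simp

lemma haar_coeff_sq_add {L R : ℝ} (hL : 0 < L) (hR : 0 < R) :
    √(L / ((L + R) * R)) ^ 2 * R + √(R / ((L + R) * L)) ^ 2 * L = 1 := by
  rw [Real.sq_sqrt (by positivity), Real.sq_sqrt (by positivity)]
  field_simp

section Haar
variable {σ : Measure ℝ} {k m : ℤ}

lemma haarW_of_degenerate (h : ¬(σ (dyL k m) ≠ 0 ∧ σ (dyR k m) ≠ 0)) : haarW σ k m = 0 := by
  rw [haarW, if_neg h]

lemma haarW_eq_zero_of_notMem {x : ℝ} (hx : x ∉ dy k m) : haarW σ k m x = 0 := by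
  have hL : x ∉ dyL k m := fun h => hx (dyL_subset_dy k m h)
  have hR : x ∉ dyR k m := fun h => hx (dyR_subset_dy k m h)
  unfold haarW
  split_ifs <;> simp [hL, hR]

lemma haarW_congr {x y : ℝ} (h : ⌊x / 2 ^ (k - 1)⌋ = ⌊y / 2 ^ (k - 1)⌋) :
    haarW σ k m x = haarW σ k m y := by
  unfold haarW dyL dyR
  split_ifs
  · simp only [Set.indicator_apply, mem_dy_iff, h, Pi.one_apply]
  · rfl

lemma haarW_eqOn_dy_of_lt {l : ℤ} (u : ℤ) (hkl : k < l) :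
    ∀ x ∈ dy k m, haarW σ l u x = haarW σ l u (2 ^ k * m) := by
  intro x hx
  apply haarW_congr
  obtain ⟨t, ht⟩ : ∃ t : ℕ, l - 1 = k + t := ⟨(l - 1 - k).toNat, by omega⟩
  rw [ht, floor_div_two_zpow_add, floor_div_two_zpow_add, mem_dy_iff.mp hx,
    mem_dy_iff.mp (mem_dy_self k m)]

variable [IsLocallyFiniteMeasure σ]

lemma measure_dy_ne_top : σ (dy k m) ≠ ⊤ := measure_Ico_lt_top.ne

lemma measure_dyL_ne_top : σ (dyL k m) ≠ ⊤ := measure_dy_ne_top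

lemma measure_dyR_ne_top : σ (dyR k m) ≠ ⊤ := measure_dy_ne_top

lemma measureReal_dy_eq_add : σ.real (dy k m) = σ.real (dyL k m) + σ.real (dyR k m) := by
  rw [dy_eq_dyL_union_dyR, measureReal_union (disjoint_dyL_dyR k m) measurableSet_Ico
    measure_dyL_ne_top measure_dyR_ne_top]

lemma memLp_haarW : MemLp (haarW σ k m) 2 σ := by
  unfold haarW
  split_ifs
  · have hind : ∀ {U : Set ℝ}, MeasurableSet U → σ U ≠ ⊤ → MemLp (U.indicator (1 : ℝ → ℝ)) 2 σ :=
      fun hU hUσ => memLp_indicator_const 2 hU 1 (Or.inr hUσ)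
    exact ((hind measurableSet_Ico measure_dyR_ne_top).const_mul _).sub
      ((hind measurableSet_Ico measure_dyL_ne_top).const_mul _)
  · exact MemLp.zero

lemma integral_haarW : ∫ x, haarW σ k m x ∂σ = 0 := by
  by_cases h : σ (dyL k m) ≠ 0 ∧ σ (dyR k m) ≠ 0
  · simp only [haarW, if_pos h]
    rw [integral_const_mul_indicator_sub (S := dyR k m) (T := dyL k m) measurableSet_Ico
      measurableSet_Ico measure_dyR_ne_top measure_dyL_ne_top]
    simp only [← measureReal_def]
    rw [measureReal_dy_eq_add, haar_coeff_mul_eq, sub_self]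
    · exact ENNReal.toReal_pos h.1 measure_dyL_ne_top
    · exact ENNReal.toReal_pos h.2 measure_dyR_ne_top
  · simp [haarW_of_degenerate h]

lemma integral_haarW_sq (h : σ (dyL k m) ≠ 0 ∧ σ (dyR k m) ≠ 0) :
    ∫ x, haarW σ k m x ^ 2 ∂σ = 1 := by
  simp only [haarW, if_pos h]
  rw [integral_sq_const_mul_indicator_sub (disjoint_dyL_dyR k m).symm measurableSet_Ico
      measurableSet_Ico measure_dyR_ne_top measure_dyL_ne_top]
  simp only [← measureReal_def]
  rw [measureReal_dy_eq_add, haar_coeff_sq_add]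
  · exact ENNReal.toReal_pos h.1 measure_dyL_ne_top
  · exact ENNReal.toReal_pos h.2 measure_dyR_ne_top

lemma integral_haarW_mul_eq_zero_of_eqOn {g : ℝ → ℝ} {c : ℝ} (hg : ∀ x ∈ dy k m, g x = c) :
    ∫ x, haarW σ k m x * g x ∂σ = 0 := by
  have hpt : ∀ x, haarW σ k m x * g x = haarW σ k m x * c := by
    intro x
    by_cases hx : x ∈ dy k m
    · rw [hg x hx]
    · simp [haarW_eq_zero_of_notMem hx]
  simp only [hpt]
  rw [integral_mul_const, integral_haarW, zero_mul]

lemma integral_haarW_mul_haarW_of_ne {l u : ℤ} (h : (k, m) ≠ (l, u)) :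
    ∫ x, haarW σ k m x * haarW σ l u x ∂σ = 0 := by
  wlog hkl : k ≤ l generalizing k m l u
  · simp_rw [mul_comm (haarW σ k m _)]
    exact this h.symm (le_of_not_ge hkl)
  rcases hkl.lt_or_eq with hlt | rfl
  · exact integral_haarW_mul_eq_zero_of_eqOn (haarW_eqOn_dy_of_lt u hlt)
  · have hmu : m ≠ u := by simpa using h
    refine integral_haarW_mul_eq_zero_of_eqOn (c := 0) fun x hx => haarW_eq_zero_of_notMem ?_
    exact fun hx' => hmu ((mem_dy_iff.mp hx).symm.trans (mem_dy_iff.mp hx'))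

end Haar

section L2
variable {α : Type*} [MeasurableSpace α] {μ : Measure α} {f g : α → ℝ}

lemma inner_toLp_eq_integral (hf : MemLp f 2 μ) (hg : MemLp g 2 μ) :
    inner ℝ (hf.toLp f) (hg.toLp g) = ∫ x, f x * g x ∂μ := by
  rw [L2.inner_def]
  refine integral_congr_ae ?_
  filter_upwards [hf.coeFn_toLp, hg.coeFn_toLp] with x hfx hgx
  rw [hfx, hgx, RCLike.inner_apply, conj_trivial, mul_comm]

end L2

lemma nrm_eq_norm_toLp {μ : Measure ℝ} {f : ℝ → ℝ} (hf : MemLp f 2 μ) : nrm μ f = ‖hf.toLp f‖ := by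
  rw [nrm, ← Real.sqrt_sq (norm_nonneg _), ← real_inner_self_eq_norm_sq,
    inner_toLp_eq_integral]
  simp only [sq]

lemma orthonormal_haarW (σ : Measure ℝ) [IsLocallyFiniteMeasure σ] :
    Orthonormal ℝ fun p : {p : ℤ × ℤ // σ (dyL p.1 p.2) ≠ 0 ∧ σ (dyR p.1 p.2) ≠ 0} =>
      (memLp_haarW (σ := σ) (k := p.1.1) (m := p.1.2)).toLp _ := by
  rw [orthonormal_iff_ite]
  intro p q
  rw [inner_toLp_eq_integral]
  split_ifs with hpq
  · subst hpq
    simpa [sq] using integral_haarW_sq p.2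
  · exact integral_haarW_mul_haarW_of_ne fun h => hpq (Subtype.ext h)

lemma sum_sq_ip_haarW_le {σ : Measure ℝ} [IsLocallyFiniteMeasure σ] {f : ℝ → ℝ}
    (hf : MemLp f 2 σ) (S : Finset (ℤ × ℤ)) :
    ∑ p ∈ S, ip σ f (haarW σ p.1 p.2) ^ 2 ≤ nrm σ f ^ 2 := by
  set P : ℤ × ℤ → Prop := fun p => σ (dyL p.1 p.2) ≠ 0 ∧ σ (dyR p.1 p.2) ≠ 0
  have hdeg : ∀ p ∈ S, ip σ f (haarW σ p.1 p.2) ^ 2 ≠ 0 → P p := by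
    intro p _ hp
    by_contra hdeg
    simp [ip, haarW_of_degenerate hdeg] at hp
  rw [← Finset.sum_filter_of_ne hdeg, ← Finset.sum_subtype_eq_sum_filter, nrm_eq_norm_toLp hf]
  convert (orthonormal_haarW σ).sum_inner_products_le (hf.toLp f) (s := S.subtype P) using 2
  rw [inner_toLp_eq_integral, Real.norm_eq_abs, sq_abs, ip]
  simp_rw [mul_comm]

/-- `J` has size between `2^{-r}|I|` and `2^r|I|` and lies in `I^{(r)}`, which contains it
`(I.1 + r - J.1).toNat` generations up. -/
def InBand (r : ℕ) (I J : ℤ × ℤ) : Prop :=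
  J.1 ≤ I.1 + r ∧ I.1 ≤ J.1 + r ∧ J.2.fdiv (2 ^ (I.1 + r - J.1).toNat) = I.2.fdiv (2 ^ r)

lemma inBand_of_le_of_subset {r : ℕ} {k m l u : ℤ}
    (hlo : (2:ℝ) ^ (-(r:ℤ)) * 2 ^ k ≤ 2 ^ l) (hhi : (2:ℝ) ^ l ≤ 2 ^ (r:ℤ) * 2 ^ k)
    (hsub : dy l u ⊆ dyUp r k m) : InBand r (k, m) (l, u) := by
  rw [← zpow_add₀ two_ne_zero, zpow_le_zpow_iff_right₀ one_lt_two] at hlo hhi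
  have hlevel : l + ((k + r - l).toNat : ℕ) = k + r := by omega
  rw [dyUp, ← hlevel] at hsub
  exact ⟨by omega, by omega, fdiv_eq_of_dy_subset hsub⟩

section Counting
open Finset

lemma sum_comp_le_mul_sum_image {ι κ : Type*} [DecidableEq κ] (E : Finset ι) (g : ι → κ)
    {w : κ → ℝ} (hw : ∀ j, 0 ≤ w j) {N : ℕ} (hN : ∀ j, #{q ∈ E | g q = j} ≤ N) :
    ∑ q ∈ E, w (g q) ≤ N * ∑ j ∈ E.image g, w j := by
  rw [sum_comp, mul_sum]
  gcongr with j
  rw [nsmul_eq_mul]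
  exact mul_le_mul_of_nonneg_right (by exact_mod_cast hN j) (hw j)

lemma sum_abs_mul_abs_le_of_card_fiber_le {α β : Type*} [DecidableEq α] [DecidableEq β]
    (E : Finset (α × β)) {a : α → ℝ} {b : β → ℝ} {A B : ℕ} {Ma Mb : ℝ}
    (hA : ∀ i, #{q ∈ E | q.1 = i} ≤ A) (hB : ∀ j, #{q ∈ E | q.2 = j} ≤ B)
    (ha : ∀ S : Finset α, ∑ i ∈ S, a i ^ 2 ≤ Ma) (hb : ∀ S : Finset β, ∑ j ∈ S, b j ^ 2 ≤ Mb) :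
    ∑ q ∈ E, |a q.1| * |b q.2| ≤ √(A * Ma) * √(B * Mb) := by
  calc ∑ q ∈ E, |a q.1| * |b q.2|
      ≤ √(∑ q ∈ E, |a q.1| ^ 2) * √(∑ q ∈ E, |b q.2| ^ 2) := Real.sum_mul_le_sqrt_mul_sqrt _ _ _
    _ ≤ √(A * Ma) * √(B * Mb) := by
      simp only [sq_abs]
      gcongr
      · exact (sum_comp_le_mul_sum_image E Prod.fst (fun _ => sq_nonneg _) hA).trans
          (by gcongr; exact ha _)
      · exact (sum_comp_le_mul_sum_image E Prod.snd (fun _ => sq_nonneg _) hB).trans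
          (by gcongr; exact hb _)

lemma card_Ico_add_two_pow (c : ℤ) (n : ℕ) : (Finset.Ico c (c + 2 ^ n)).card = 2 ^ n := by
  rw [Int.card_Ico, add_sub_cancel_left]
  exact_mod_cast Int.toNat_natCast (2 ^ n)

/-- Elements are determined by a level `t ∈ R` and a position with a prescribed quotient by
`2 ^ n t`. -/
lemma card_le_sum_two_pow_of_injOn {X : Type*} {s : Finset X} {R : Finset ℕ} {level : X → ℕ}
    {pos : X → ℤ} {c : ℕ → ℤ} {n : ℕ → ℕ} (hlevel : ∀ x ∈ s, level x ∈ R)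
    (hpos : ∀ x ∈ s, (pos x).fdiv (2 ^ n (level x)) = c (level x))
    (hinj : ∀ x ∈ s, ∀ y ∈ s, level x = level y → pos x = pos y → x = y) :
    #s ≤ ∑ t ∈ R, 2 ^ n t := by
  classical
  rw [card_eq_sum_card_fiberwise hlevel]
  refine sum_le_sum fun t _ => ?_
  rw [← card_Ico_add_two_pow (c t * 2 ^ n t)]
  refine card_le_card_of_injOn pos (fun x hx => ?_) (fun x hx y hy h => ?_)
  · obtain ⟨hxs, rfl⟩ := mem_filter.mp hx
    exact mem_Ico_of_fdiv_eq (hpos x hxs)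
  · obtain ⟨hxs, hxt⟩ := mem_filter.mp hx
    obtain ⟨hys, hyt⟩ := mem_filter.mp hy
    exact hinj x hxs y hys (hxt.trans hyt.symm) h

section Band
variable {r : ℕ} {E : Finset ((ℤ × ℤ) × (ℤ × ℤ))}

lemma card_filter_fst_eq_le_of_inBand (hE : ∀ q ∈ E, InBand r q.1 q.2) (I : ℤ × ℤ) :
    #{q ∈ E | q.1 = I} ≤ 2 ^ (2 * r + 1) - 1 := by
  refine (card_le_sum_two_pow_of_injOn (R := range (2 * r + 1))
    (level := fun q => (I.1 + r - q.2.1).toNat) (pos := fun q => q.2.2)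
    (c := fun _ => I.2.fdiv (2 ^ r)) (n := id) ?_ ?_ ?_).trans ?_
  · intro q hq
    obtain ⟨hqE, rfl⟩ := mem_filter.mp hq
    have := hE q hqE
    simp only [InBand, Finset.mem_range] at this ⊢
    omega
  · intro q hq
    obtain ⟨hqE, rfl⟩ := mem_filter.mp hq
    exact (hE q hqE).2.2
  · intro q hq q' hq' hlevel hpos
    obtain ⟨hqE, rfl⟩ := mem_filter.mp hq
    obtain ⟨hq'E, hq'I⟩ := mem_filter.mp hq'
    have h := hE q hqE
    have h' := hE q' hq'E
    simp only [InBand] at h h' hlevel hpos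
    rw [hq'I] at h'
    exact Prod.ext hq'I.symm (Prod.ext (by omega) hpos)
  · exact Nat.le_sub_one_of_lt (Nat.geomSum_lt le_rfl fun t ht => Finset.mem_range.mp ht)

lemma card_filter_snd_eq_le_of_inBand (hE : ∀ q ∈ E, InBand r q.1 q.2) (J : ℤ × ℤ) :
    #{q ∈ E | q.2 = J} ≤ (2 * r + 1) * 2 ^ r := by
  refine (card_le_sum_two_pow_of_injOn (R := range (2 * r + 1))
    (level := fun q => (q.1.1 + r - J.1).toNat) (pos := fun q => q.1.2)
    (c := fun t => J.2.fdiv (2 ^ t)) (n := fun _ => r) ?_ ?_ ?_).trans ?_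
  · intro q hq
    obtain ⟨hqE, rfl⟩ := mem_filter.mp hq
    have := hE q hqE
    simp only [InBand, Finset.mem_range] at this ⊢
    omega
  · intro q hq
    obtain ⟨hqE, rfl⟩ := mem_filter.mp hq
    exact (hE q hqE).2.2.symm
  · intro q hq q' hq' hlevel hpos
    obtain ⟨hqE, rfl⟩ := mem_filter.mp hq
    obtain ⟨hq'E, hq'J⟩ := mem_filter.mp hq'
    have h := hE q hqE
    have h' := hE q' hq'E
    simp only [InBand] at h h' hlevel hpos
    rw [hq'J] at h'
    exact Prod.ext (Prod.ext (by omega) hpos) hq'J.symm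
  · simp

end Band

end Counting

lemma band_count_le (r : ℕ) : (2 * r + 1) * 2 ^ r ≤ 2 ^ (2 * r + 1) - 1 := by
  have h := Nat.lt_two_pow_self (n := r)
  have hpow : 2 ^ (2 * r + 1) = 2 * 2 ^ r * 2 ^ r := by ring
  have hpos := Nat.one_le_two_pow (n := r)
  rw [hpow]
  refine Nat.le_sub_one_of_lt ?_
  nlinarith

lemma sqrt_mul_sq_mul_sqrt_mul_sq_le {A B x y : ℝ} (hBA : B ≤ A) (hB : 0 ≤ B) (hx : 0 ≤ x)
    (hy : 0 ≤ y) : √(A * x ^ 2) * √(B * y ^ 2) ≤ A * (x * y) := by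
  have hA : 0 ≤ A := hB.trans hBA
  calc √(A * x ^ 2) * √(B * y ^ 2) ≤ √(A * x ^ 2) * √(A * y ^ 2) := by gcongr
    _ = A * (x * y) := by
      rw [← Real.sqrt_mul (by positivity), show A * x ^ 2 * (A * y ^ 2) = (A * (x * y)) ^ 2 by ring,
        Real.sqrt_sq (by positivity)]

lemma sum_abs_ip_haarW_mul_le_of_inBand {σ ω : Measure ℝ} [IsLocallyFiniteMeasure σ]
    [IsLocallyFiniteMeasure ω] {f g : ℝ → ℝ} (hf : MemLp f 2 σ) (hg : MemLp g 2 ω) {r : ℕ}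
    {E : Finset ((ℤ × ℤ) × (ℤ × ℤ))} (hE : ∀ q ∈ E, InBand r q.1 q.2) :
    ∑ q ∈ E, |ip σ f (haarW σ q.1.1 q.1.2)| * |ip ω g (haarW ω q.2.1 q.2.2)|
      ≤ ((2:ℝ) ^ (2 * r + 1) - 1) * (nrm σ f * nrm ω g) := by
  have hcount : (((2 * r + 1) * 2 ^ r : ℕ) : ℝ) ≤ ((2 ^ (2 * r + 1) - 1 : ℕ) : ℝ) := by
    exact_mod_cast band_count_le r
  calc _ ≤ √((2 ^ (2 * r + 1) - 1 : ℕ) * nrm σ f ^ 2)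
        * √(((2 * r + 1) * 2 ^ r : ℕ) * nrm ω g ^ 2) :=
        sum_abs_mul_abs_le_of_card_fiber_le E (card_filter_fst_eq_le_of_inBand hE)
          (card_filter_snd_eq_le_of_inBand hE) (sum_sq_ip_haarW_le hf) (sum_sq_ip_haarW_le hg)
    _ ≤ (2 ^ (2 * r + 1) - 1 : ℕ) * (nrm σ f * nrm ω g) :=
        sqrt_mul_sq_mul_sqrt_mul_sq_le hcount (Nat.cast_nonneg _) (Real.sqrt_nonneg _)
          (Real.sqrt_nonneg _)
    _ = ((2:ℝ) ^ (2 * r + 1) - 1) * (nrm σ f * nrm ω g) := by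
        rw [Nat.cast_sub Nat.one_le_two_pow]
        push_cast
        ring

/-- Diagonal band estimate: if the Haar coefficient pairings of `T` in the diagonal band
`2^{-r}|I| ≤ |J| ≤ 2^r|I|`, `J ⊆ I^{(r)}` are bounded by `C₃`, then the full band sum is
controlled by `(2^{2r+1} - 1) C₃ ‖f‖_{L²(σ)} ‖g‖_{L²(ω)}` (stated for arbitrary finite
partial sums of the band sum of nonnegative terms). -/
theorem diagonal_band_estimate (σ ω : Measure ℝ)
    [IsLocallyFiniteMeasure σ] [IsLocallyFiniteMeasure ω]
    (P : FormalPair σ ω) (r : ℕ) (C₃ : ℝ)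
    (hband : ∀ k m l u : ℤ, (2:ℝ)^(-(r:ℤ)) * (2:ℝ)^k ≤ (2:ℝ)^l → (2:ℝ)^l ≤ (2:ℝ)^(r:ℤ) * (2:ℝ)^k →
      dy l u ⊆ dyUp r k m →
      |ip ω (P.T (haarW σ k m)) (haarW ω l u)| ≤ C₃)
    (f : ℝ → ℝ) (hf : MemLp f 2 σ) (g : ℝ → ℝ) (hg : MemLp g 2 ω) :
    ∀ s : Finset ((ℤ × ℤ) × (ℤ × ℤ)),
      ∑ q ∈ s,
        Set.indicator {q : (ℤ × ℤ) × (ℤ × ℤ) |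
            (2:ℝ)^(-(r:ℤ)) * (2:ℝ)^q.1.1 ≤ (2:ℝ)^q.2.1 ∧ (2:ℝ)^q.2.1 ≤ (2:ℝ)^(r:ℤ) * (2:ℝ)^q.1.1 ∧
            dy q.2.1 q.2.2 ⊆ dyUp r q.1.1 q.1.2}
          (fun q => |ip σ f (haarW σ q.1.1 q.1.2)| * |ip ω g (haarW ω q.2.1 q.2.2)| *
            |ip ω (P.T (haarW σ q.1.1 q.1.2)) (haarW ω q.2.1 q.2.2)|) q
      ≤ ((2:ℝ)^(2*r+1) - 1) * C₃ * (nrm σ f * nrm ω g) := by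
  intro s
  have hC : 0 ≤ C₃ := (abs_nonneg _).trans (hband 0 0 0 0
    (by simpa using zpow_le_one_of_nonpos₀ (one_le_two : (1:ℝ) ≤ 2) (by omega : -(r:ℤ) ≤ 0))
    (by simpa using one_le_zpow₀ (one_le_two : (1:ℝ) ≤ 2) (by omega : (0:ℤ) ≤ r))
    (dy_subset_dy_fdiv 0 0 r))
  rw [Finset.sum_indicator_eq_sum_filter]
  calc _ ≤ ∑ q ∈ s with _,
        C₃ * (|ip σ f (haarW σ q.1.1 q.1.2)| * |ip ω g (haarW ω q.2.1 q.2.2)|) := by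
        refine Finset.sum_le_sum fun q hq => ?_
        obtain ⟨hlo, hhi, hsub⟩ := (Finset.mem_filter.mp hq).2
        rw [mul_comm C₃]
        exact mul_le_mul_of_nonneg_left (hband _ _ _ _ hlo hhi hsub) (by positivity)
    _ ≤ C₃ * (((2:ℝ) ^ (2 * r + 1) - 1) * (nrm σ f * nrm ω g)) := by
        rw [← Finset.mul_sum]
        refine mul_le_mul_of_nonneg_left (sum_abs_ip_haarW_mul_le_of_inBand hf hg fun q hq => ?_) hC
        obtain ⟨hlo, hhi, hsub⟩ := (Finset.mem_filter.mp hq).2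
        exact inBand_of_le_of_subset hlo hhi hsub
    _ = ((2:ℝ)^(2*r+1) - 1) * C₃ * (nrm σ f * nrm ω g) := by ring

end
end

section
/- (Dyadic Carleson embedding theorem with respect to a measure.) Let ω be a Radon measure on ℝ, Λ > 0, and let 𝒮 be a collection of dyadic intervals satisfying Σ_{S∈𝒮, S⊆Q} ω(S) ≤ Λ·ω(Q) for every Q ∈ 𝒟. Then for every g ∈ L²(ω): Σ_{S∈𝒮, ω(S)>0} ω(S)·(⟨|g|⟩_S^ω)² ≤ 4·Λ·‖g‖²_{L²(ω)}. -/
open MeasureTheory Set Filter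
open scoped Classical

noncomputable section

lemma two_zpow_pos (k : ℤ) : (0:ℝ) < 2^k := zpow_pos (by norm_num) k

lemma dy_nonempty (k m : ℤ) : (dy k m).Nonempty := by
  refine Set.nonempty_Ico.2 ?_
  have := two_zpow_pos k
  have : ((m:ℝ)) < (m+1 : ℤ) := by push_cast; linarith
  calc (2:ℝ)^k * m < 2^k * (m+1) := by
        apply mul_lt_mul_of_pos_left _ (two_zpow_pos k); push_cast; linarith

lemma measurableSet_dy (k m : ℤ) : MeasurableSet (dy k m) := measurableSet_Ico

lemma dy_rebase {k k' : ℤ} (hk : k ≤ k') (m' : ℤ) :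
    dy k' m' = Set.Ico ((2:ℝ)^k * (2^(k'-k).toNat * m' : ℤ))
      ((2:ℝ)^k * ((2^(k'-k).toNat * m' : ℤ) + (2^(k'-k).toNat : ℤ))) := by
  set e : ℕ := (k'-k).toNat with he
  have hke : k' = k + e := by omega
  have h2 : (2:ℝ)^k' = 2^k * 2^e := by
    rw [hke, zpow_add₀ (by norm_num : (2:ℝ) ≠ 0), zpow_natCast]
  unfold dy
  congr 1 <;> · rw [h2]; push_cast; ring

lemma dy_subset_of_inter {k k' m m' : ℤ} (hk : k ≤ k')
    (h : (dy k m ∩ dy k' m').Nonempty) : dy k m ⊆ dy k' m' := by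
  obtain ⟨x, hx1, hx2⟩ := h
  set e : ℕ := (k'-k).toNat with he
  have hre := dy_rebase hk m'
  rw [hre] at hx2 ⊢
  have hc := two_zpow_pos k
  obtain ⟨ha1, ha2⟩ := hx1
  obtain ⟨hb1, hb2⟩ := hx2
  push_cast at ha1 ha2 hb1 hb2
  have hr1 : (2:ℝ)^e * m' < (m:ℝ) + 1 := by
    have h := lt_of_le_of_lt hb1 ha2
    have := (mul_lt_mul_iff_right₀ hc).1 h
    push_cast at this ⊢; linarith
  have hr2 : (m:ℝ) < 2^e * m' + 2^e := by
    have h := lt_of_le_of_lt ha1 hb2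
    have := (mul_lt_mul_iff_right₀ hc).1 h
    push_cast at this ⊢; linarith
  have hA : (2^e * m' : ℤ) ≤ m :=
    Int.lt_add_one_iff.1 (by exact_mod_cast hr1)
  have hB : m + 1 ≤ (2^e * m' + 2^e : ℤ) :=
    Int.add_one_le_iff.2 (by exact_mod_cast hr2)
  apply Set.Ico_subset_Ico
  · apply mul_le_mul_of_nonneg_left _ hc.le
    have : ((2^e * m' : ℤ):ℝ) ≤ ((m:ℤ):ℝ) := by exact_mod_cast hA
    push_cast at this ⊢; linarith
  · apply mul_le_mul_of_nonneg_left _ hc.le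
    have : ((m+1 : ℤ):ℝ) ≤ ((2^e * m' + 2^e : ℤ):ℝ) := by exact_mod_cast hB
    push_cast at this ⊢; linarith

lemma dy_k_le_of_subset {k k' m m' : ℤ} (h : dy k m ⊆ dy k' m') : k ≤ k' := by
  by_contra hlt
  push_neg at hlt
  have hne := dy_nonempty k m
  have h2 := (Set.Ico_subset_Ico_iff (by obtain ⟨x, h1, h2⟩ := hne; linarith)).1 h
  have hc := two_zpow_pos k
  have hc' := two_zpow_pos k'
  have hlen : (2:ℝ)^k ≤ 2^k' := by nlinarith [h2.1, h2.2]
  have : (2:ℝ)^k' < 2^k := zpow_lt_zpow_right₀ (by norm_num) hlt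
  linarith

lemma dy_eq_of_subset_same_k {k m m' : ℤ} (h : dy k m ⊆ dy k m') : m = m' := by
  have hne := dy_nonempty k m
  have h2 := (Set.Ico_subset_Ico_iff (by obtain ⟨x, h1, h2⟩ := hne; linarith)).1 h
  have hc := two_zpow_pos k
  have h1 : (m':ℝ) ≤ m := le_of_mul_le_mul_left h2.1 hc
  have h3 : (m:ℝ)+1 ≤ (m':ℝ)+1 := by
    have := le_of_mul_le_mul_left h2.2 hc; push_cast at this ⊢; linarith
  have : (m:ℝ) = m' := le_antisymm (by linarith) (by exact_mod_cast h1)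
  exact_mod_cast this

lemma dy_eq_of_subset_subset {k k' m m' : ℤ} (h : dy k m ⊆ dy k' m') (h' : dy k' m' ⊆ dy k m) :
    k = k' ∧ m = m' := by
  have hk : k = k' := le_antisymm (dy_k_le_of_subset h) (dy_k_le_of_subset h')
  subst hk
  exact ⟨rfl, dy_eq_of_subset_same_k h⟩

lemma dy_finite (ω : Measure ℝ) [IsLocallyFiniteMeasure ω] (k m : ℤ) : ω (dy k m) ≠ ⊤ := by
  have h1 : dy k m ⊆ Set.Icc ((2:ℝ)^k * m) ((2:ℝ)^k * (m+1)) := Set.Ico_subset_Icc_self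
  have h2 : ω (Set.Icc ((2:ℝ)^k * m) ((2:ℝ)^k * (m+1))) < ⊤ := isCompact_Icc.measure_lt_top
  exact ((measure_mono h1).trans_lt h2).ne

lemma exists_maximal_dy (G : Finset (ℤ × ℤ)) {q : ℤ × ℤ} (hq : q ∈ G) :
    ∃ p ∈ G, dy q.1 q.2 ⊆ dy p.1 p.2 ∧ ∀ r ∈ G, dy p.1 p.2 ⊆ dy r.1 r.2 → p = r := by
  classical
  set H := G.filter (fun p => dy q.1 q.2 ⊆ dy p.1 p.2) with hH
  have hqH : q ∈ H := Finset.mem_filter.2 ⟨hq, subset_rfl⟩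
  obtain ⟨p, hpH, hmax⟩ := H.exists_max_image Prod.fst ⟨q, hqH⟩
  obtain ⟨hpG, hsub⟩ := Finset.mem_filter.1 hpH
  refine ⟨p, hpG, hsub, fun r hr hpr => ?_⟩
  have hrH : r ∈ H := Finset.mem_filter.2 ⟨hr, hsub.trans hpr⟩
  have h1 : r.1 ≤ p.1 := hmax r hrH
  have h2 : p.1 ≤ r.1 := dy_k_le_of_subset hpr
  have hk : p.1 = r.1 := le_antisymm h2 h1
  have hm : p.2 = r.2 := by
    rw [hk] at hpr
    exact dy_eq_of_subset_same_k hpr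
  exact Prod.ext hk hm

lemma dy_disjoint_of_not_subset {p r : ℤ × ℤ}
    (h1 : ¬ dy p.1 p.2 ⊆ dy r.1 r.2) (h2 : ¬ dy r.1 r.2 ⊆ dy p.1 p.2) :
    Disjoint (dy p.1 p.2) (dy r.1 r.2) := by
  rw [Set.disjoint_iff_inter_eq_empty]
  by_contra hne
  have hne' : (dy p.1 p.2 ∩ dy r.1 r.2).Nonempty := Set.nonempty_iff_ne_empty.2 hne
  rcases le_total p.1 r.1 with h | h
  · exact h1 (dy_subset_of_inter h hne')
  · exact h2 (dy_subset_of_inter h (by rwa [Set.inter_comm] at hne'))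

lemma downward_all {m : ℕ} {b : ℕ → Prop} (hb : ∀ i, i + 1 < m + 1 → (b (i+1) → b i))
    (hbm : b m) : ∀ i, i < m + 1 → b i := by
  intro i hi
  have key : ∀ j, j ≤ m → b (m - j) := by
    intro j
    induction j with
    | zero => intro _; simpa using hbm
    | succ j ih =>
      intro hj
      have h1 : b (m - j) := ih (by omega)
      have h2 : m - (j+1) + 1 = m - j := by omega
      exact hb (m - (j+1)) (by omega) (by rw [h2]; exact h1)
  have : b (m - (m - i)) := key (m - i) (by omega)
  rwa [show m - (m - i) = i by omega] at this

lemma telescope_sq (t : ℕ → ℝ) (ht0 : t 0 = 0) (m : ℕ) (b : ℕ → Prop)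
    (hb : ∀ i, i + 1 < m → (b (i+1) → b i)) :
    (∑ i ∈ Finset.range m, if b i then t (i+1) - t i else 0)^2
      = ∑ i ∈ Finset.range m, if b i then t (i+1)^2 - t i^2 else 0 := by
  classical
  induction m with
  | zero => simp
  | succ m ih =>
    by_cases hbm : b m
    · have hall := downward_all hb hbm
      have e1 : ∑ i ∈ Finset.range (m+1), (if b i then t (i+1) - t i else 0)
          = ∑ i ∈ Finset.range (m+1), (t (i+1) - t i) := by
        apply Finset.sum_congr rfl
        intro i hi
        exact if_pos (hall i (Finset.mem_range.1 hi))
      have e2 : ∑ i ∈ Finset.range (m+1), (if b i then t (i+1)^2 - t i^2 else 0)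
          = ∑ i ∈ Finset.range (m+1), (t (i+1)^2 - t i^2) := by
        apply Finset.sum_congr rfl
        intro i hi
        exact if_pos (hall i (Finset.mem_range.1 hi))
      rw [e1, e2, Finset.sum_range_sub (fun i => t i), Finset.sum_range_sub (fun i => t i ^ 2),
        ht0]
      ring
    · rw [Finset.sum_range_succ, Finset.sum_range_succ, if_neg hbm, if_neg hbm, add_zero,
        add_zero]
      exact ih (fun i hi => hb i (by omega))

lemma abs_integrableOn {ω : Measure ℝ} {g : ℝ → ℝ} (hg : MemLp g 2 ω) {A : Set ℝ}
    (hA : MeasurableSet A) (hfin : ω A ≠ ⊤) : IntegrableOn (fun x => |g x|) A ω := by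
  have h1 : MemLp (fun x => |g x|) 2 (ω.restrict A) := by
    have := (hg.restrict A).norm
    simpa [Real.norm_eq_abs] using this
  haveI : IsFiniteMeasure (ω.restrict A) := by
    constructor
    rw [Measure.restrict_apply_univ]
    exact hfin.lt_top
  exact h1.integrable (by norm_num)

lemma cover_bounds (ω : Measure ℝ) [IsLocallyFiniteMeasure ω] (Λ : ℝ) (hΛ : 0 < Λ)
    (S : Set (ℤ × ℤ))
    (hpack : ∀ k m : ℤ,
      ∑' q : {q : ℤ × ℤ // q ∈ S ∧ dy q.1 q.2 ⊆ dy k m},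
        ω (dy (q : ℤ × ℤ).1 (q : ℤ × ℤ).2) ≤ ENNReal.ofReal Λ * ω (dy k m))
    (g : ℝ → ℝ) (hg : MemLp g 2 ω)
    (G : Finset (ℤ × ℤ)) (hGS : ∀ q ∈ G, q ∈ S) (hG0 : ∀ q ∈ G, ω (dy q.1 q.2) ≠ 0)
    (c : ℝ) (hc : ∀ q ∈ G, c ≤ avg ω (dy q.1 q.2) fun x => |g x|) :
    (∑ q ∈ G, (ω (dy q.1 q.2)).toReal ≤ Λ * (ω (⋃ q ∈ G, dy q.1 q.2)).toReal)
    ∧ c * (ω (⋃ q ∈ G, dy q.1 q.2)).toReal ≤ ∫ x in (⋃ q ∈ G, dy q.1 q.2), |g x| ∂ω := by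
  classical
  set Mx := G.filter (fun p => ∀ r ∈ G, dy p.1 p.2 ⊆ dy r.1 r.2 → p = r) with hMxdef
  have hMxsub : Mx ⊆ G := Finset.filter_subset _ _
  have hmaxMx : ∀ p ∈ Mx, ∀ r ∈ G, dy p.1 p.2 ⊆ dy r.1 r.2 → p = r :=
    fun p hp => (Finset.mem_filter.1 hp).2
  have hcover : ∀ q ∈ G, ∃ p ∈ Mx, dy q.1 q.2 ⊆ dy p.1 p.2 := by
    intro q hq
    obtain ⟨p, hpG, hsub, hmax⟩ := exists_maximal_dy G hq
    exact ⟨p, Finset.mem_filter.2 ⟨hpG, hmax⟩, hsub⟩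
  have hdisj : (Mx : Set (ℤ × ℤ)).PairwiseDisjoint fun p => dy p.1 p.2 := by
    intro p hp r hr hpr
    apply dy_disjoint_of_not_subset
    · intro hsub; exact hpr (hmaxMx p hp r (hMxsub hr) hsub)
    · intro hsub; exact hpr ((hmaxMx r hr p (hMxsub hp) hsub).symm)
  have hUeq : (⋃ q ∈ G, dy q.1 q.2) = ⋃ p ∈ Mx, dy p.1 p.2 := by
    apply subset_antisymm
    · apply Set.iUnion₂_subset
      intro q hq
      obtain ⟨p, hp, hsub⟩ := hcover q hq
      exact hsub.trans (Set.subset_iUnion₂ (s := fun (p : ℤ × ℤ) (_ : p ∈ Mx) => dy p.1 p.2) p hp)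
    · apply Set.iUnion₂_subset
      intro p hp
      exact Set.subset_iUnion₂ (s := fun (q : ℤ × ℤ) (_ : q ∈ G) => dy q.1 q.2) p (hMxsub hp)
  have hmeasU : ω (⋃ p ∈ Mx, dy p.1 p.2) = ∑ p ∈ Mx, ω (dy p.1 p.2) :=
    measure_biUnion_finset hdisj (fun p _ => measurableSet_dy _ _)
  have hfinU : ω (⋃ q ∈ G, dy q.1 q.2) ≠ ⊤ := by
    refine ne_of_lt (lt_of_le_of_lt (measure_biUnion_finset_le G _) ?_)
    exact ENNReal.sum_lt_top.2 (fun q _ => (dy_finite ω q.1 q.2).lt_top)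
  constructor
  · -- Carleson packing bound
    have hGsplit : G = Mx.biUnion (fun p => G.filter fun q => dy q.1 q.2 ⊆ dy p.1 p.2) := by
      ext q
      simp only [Finset.mem_biUnion, Finset.mem_filter]
      constructor
      · intro hq
        obtain ⟨p, hp, hs⟩ := hcover q hq
        exact ⟨p, hp, hq, hs⟩
      · rintro ⟨p, hp, hq, -⟩; exact hq
    have hpd : (Mx : Set (ℤ × ℤ)).PairwiseDisjoint
        (fun p => G.filter fun q => dy q.1 q.2 ⊆ dy p.1 p.2) := by
      intro p hp r hr hpr
      have hd := hdisj hp hr hpr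
      simp only [Function.onFun, Finset.disjoint_left, Finset.mem_filter]
      rintro q ⟨-, hq1⟩ ⟨-, hq2⟩
      obtain ⟨x, hx⟩ := dy_nonempty q.1 q.2
      exact Set.disjoint_left.1 hd (hq1 hx) (hq2 hx)
    have hsum1 : ∑ q ∈ G, ω (dy q.1 q.2)
        = ∑ p ∈ Mx, ∑ q ∈ G.filter (fun q => dy q.1 q.2 ⊆ dy p.1 p.2), ω (dy q.1 q.2) := by
      conv_lhs => rw [hGsplit]
      exact Finset.sum_biUnion hpd
    have hsum2 : ∀ p ∈ Mx,
        ∑ q ∈ G.filter (fun q => dy q.1 q.2 ⊆ dy p.1 p.2), ω (dy q.1 q.2)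
          ≤ ENNReal.ofReal Λ * ω (dy p.1 p.2) := by
      intro p hp
      set fs := G.filter (fun q => dy q.1 q.2 ⊆ dy p.1 p.2) with hfs
      have hmem : ∀ x : {q // q ∈ fs}, x.1 ∈ S ∧ dy x.1.1 x.1.2 ⊆ dy p.1 p.2 := by
        intro x
        obtain ⟨h1, h2⟩ := Finset.mem_filter.1 x.2
        exact ⟨hGS x.1 h1, h2⟩
      set ι : {q // q ∈ fs} → {q : ℤ × ℤ // q ∈ S ∧ dy q.1 q.2 ⊆ dy p.1 p.2} :=
        fun x => ⟨x.1, hmem x⟩ with hι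
      have hinj : Function.Injective ι := by
        intro x y h
        have h2 : (ι x).1 = (ι y).1 := congrArg Subtype.val h
        exact Subtype.ext h2
      calc ∑ q ∈ fs, ω (dy q.1 q.2)
          = ∑ x ∈ fs.attach, ω (dy x.1.1 x.1.2) := (Finset.sum_attach _ _).symm
        _ = ∑ y ∈ fs.attach.image ι, ω (dy y.1.1 y.1.2) := by
            rw [Finset.sum_image (fun x _ y _ h => hinj h)]
        _ ≤ ∑' y : {q : ℤ × ℤ // q ∈ S ∧ dy q.1 q.2 ⊆ dy p.1 p.2}, ω (dy y.1.1 y.1.2) :=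
            ENNReal.sum_le_tsum _
        _ ≤ ENNReal.ofReal Λ * ω (dy p.1 p.2) := hpack p.1 p.2
    have htot : ∑ q ∈ G, ω (dy q.1 q.2) ≤ ENNReal.ofReal Λ * ω (⋃ q ∈ G, dy q.1 q.2) := by
      rw [hsum1, hUeq, hmeasU, Finset.mul_sum]
      exact Finset.sum_le_sum hsum2
    have h1 : ∑ q ∈ G, (ω (dy q.1 q.2)).toReal = (∑ q ∈ G, ω (dy q.1 q.2)).toReal :=
      (ENNReal.toReal_sum (fun q _ => dy_finite ω q.1 q.2)).symm
    rw [h1]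
    have := ENNReal.toReal_mono (ENNReal.mul_ne_top ENNReal.ofReal_ne_top hfinU) htot
    rwa [ENNReal.toReal_mul, ENNReal.toReal_ofReal hΛ.le] at this
  · -- level-set lower bound
    have hint_eq : ∫ x in (⋃ p ∈ Mx, dy p.1 p.2), |g x| ∂ω
        = ∑ p ∈ Mx, ∫ x in dy p.1 p.2, |g x| ∂ω :=
      integral_biUnion_finset Mx (fun p _ => measurableSet_dy _ _) hdisj
        (fun p _ => abs_integrableOn hg (measurableSet_dy _ _) (dy_finite ω _ _))
    have hper : ∀ p ∈ Mx, c * (ω (dy p.1 p.2)).toReal ≤ ∫ x in dy p.1 p.2, |g x| ∂ω := by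
      intro p hp
      have hwp : (ω (dy p.1 p.2)).toReal ≠ 0 :=
        ENNReal.toReal_ne_zero.2 ⟨hG0 p (hMxsub hp), dy_finite ω _ _⟩
      have havg : ∫ x in dy p.1 p.2, |g x| ∂ω
          = (avg ω (dy p.1 p.2) fun x => |g x|) * (ω (dy p.1 p.2)).toReal := by
        unfold avg
        field_simp
      rw [havg]
      exact mul_le_mul_of_nonneg_right (hc p (hMxsub hp)) ENNReal.toReal_nonneg
    rw [hUeq, hmeasU, hint_eq, ENNReal.toReal_sum (fun p _ => dy_finite ω p.1 p.2),
      Finset.mul_sum]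
    exact Finset.sum_le_sum hper

lemma ite_eq_ind (s : Set ℝ) (v : ℝ) (x : ℝ) :
    (if x ∈ s then v else 0) = s.indicator (fun _ => v) x := by
  by_cases h : x ∈ s <;> simp [h]

lemma mul_ite_eq_ind (s : Set ℝ) (v : ℝ) (gg : ℝ → ℝ) (x : ℝ) :
    gg x * (if x ∈ s then v else 0) = s.indicator (fun y => v * gg y) x := by
  by_cases h : x ∈ s <;> simp [h, mul_comm]

lemma carleson_core (ω : Measure ℝ) [IsLocallyFiniteMeasure ω] (Λ : ℝ) (hΛ : 0 < Λ)
    (S : Set (ℤ × ℤ))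
    (hpack : ∀ k m : ℤ,
      ∑' q : {q : ℤ × ℤ // q ∈ S ∧ dy q.1 q.2 ⊆ dy k m},
        ω (dy (q : ℤ × ℤ).1 (q : ℤ × ℤ).2) ≤ ENNReal.ofReal Λ * ω (dy k m))
    (g : ℝ → ℝ) (hg : MemLp g 2 ω)
    (F : Finset (ℤ × ℤ)) (hFS : ∀ q ∈ F, q ∈ S) (hF0 : ∀ q ∈ F, ω (dy q.1 q.2) ≠ 0) :
    ∑ q ∈ F, (ω (dy q.1 q.2)).toReal * (avg ω (dy q.1 q.2) fun x => |g x|) ^ 2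
      ≤ 4 * Λ * ∫ x, g x ^ 2 ∂ω := by
  classical
  have hI0 : 0 ≤ ∫ x, g x ^ 2 ∂ω := integral_nonneg fun x => sq_nonneg _
  set a : ℤ × ℤ → ℝ := fun q => avg ω (dy q.1 q.2) fun x => |g x| with ha
  have ha0 : ∀ q, 0 ≤ a q := by
    intro q
    apply mul_nonneg (inv_nonneg.2 ENNReal.toReal_nonneg)
    exact integral_nonneg fun x => abs_nonneg _
  set V : Finset ℝ := insert 0 (F.image a) with hV
  set l : List ℝ := V.sort (· ≤ ·) with hl
  set n : ℕ := l.length with hn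
  have h0l : (0:ℝ) ∈ l := (Finset.mem_sort (α := ℝ) (· ≤ ·)).2 (Finset.mem_insert_self _ _)
  have hn0 : 0 < n := List.length_pos_iff.2 (List.ne_nil_of_mem h0l)
  set t : ℕ → ℝ := fun i => l.getD i 0 with ht
  have htget : ∀ i (hi : i < n), t i = l.get ⟨i, hi⟩ := by
    intro i hi
    simp only [ht]
    rw [List.getD_eq_getElem?_getD, List.getElem?_eq_getElem (show i < l.length from hi)]; rfl
  have htmem : ∀ i, i < n → t i ∈ V := by
    intro i hi
    rw [htget i hi]
    exact (Finset.mem_sort (α := ℝ) (· ≤ ·)).1 (l.get_mem _)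
  have htnn : ∀ i, i < n → 0 ≤ t i := by
    intro i hi
    rcases Finset.mem_insert.1 (htmem i hi) with h | h
    · rw [h]
    · obtain ⟨q, _, hq⟩ := Finset.mem_image.1 h
      rw [← hq]; exact ha0 q
  have hstrict : ∀ i j, i < j → j < n → t i < t j := by
    intro i j hij hj
    rw [htget i (lt_trans hij hj), htget j hj]
    exact (Finset.sortedLT_sort V).strictMono_get (by exact hij)
  have hmono : ∀ i j, i ≤ j → j < n → t i ≤ t j := by
    intro i j hij hj
    rcases eq_or_lt_of_le hij with rfl | h
    · exact le_rfl
    · exact (hstrict i j h hj).le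
  have ht0 : t 0 = 0 := by
    obtain ⟨⟨i, hi⟩, hgi⟩ := List.mem_iff_get.1 h0l
    have h1 : t 0 ≤ 0 := by
      have := hmono 0 i (Nat.zero_le i) hi
      rwa [htget i hi, hgi] at this
    exact le_antisymm h1 (htnn 0 hn0)
  have hsurj : ∀ q ∈ F, ∃ k, k < n ∧ t k = a q := by
    intro q hq
    have haV : a q ∈ V := Finset.mem_insert_of_mem (Finset.mem_image_of_mem a hq)
    obtain ⟨⟨k, hk⟩, hgk⟩ := List.mem_iff_get.1 ((Finset.mem_sort (α := ℝ) (· ≤ ·)).2 haV)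
    exact ⟨k, hk, by rw [htget k hk]; exact hgk⟩
  set m : ℕ := n - 1 with hm
  have hmn : m + 1 = n := by omega
  set G : ℝ → Finset (ℤ × ℤ) := fun c => F.filter fun q => c ≤ a q with hG
  set U : ℝ → Set ℝ := fun c => ⋃ q ∈ G c, dy q.1 q.2 with hU
  have hUmeas : ∀ c, MeasurableSet (U c) :=
    fun c => (G c).measurableSet_biUnion (fun q _ => measurableSet_dy _ _)
  have hUfin : ∀ c, ω (U c) ≠ ⊤ := by
    intro c
    refine ne_of_lt (lt_of_le_of_lt (measure_biUnion_finset_le _ _) ?_)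
    exact ENNReal.sum_lt_top.2 fun q _ => (dy_finite ω q.1 q.2).lt_top
  have hCB : ∀ c, (∑ q ∈ G c, (ω (dy q.1 q.2)).toReal ≤ Λ * (ω (U c)).toReal)
      ∧ c * (ω (U c)).toReal ≤ ∫ x in U c, |g x| ∂ω := by
    intro c
    apply cover_bounds ω Λ hΛ S hpack g hg (G c)
      (fun q hq => hFS q (Finset.filter_subset _ _ hq))
      (fun q hq => hF0 q (Finset.filter_subset _ _ hq))
      c (fun q hq => (Finset.mem_filter.1 hq).2)
  have hUanti : ∀ c d, c ≤ d → U d ⊆ U c := by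
    intro c d hcd
    apply Set.iUnion₂_subset
    intro q hq
    have hqc : q ∈ G c := by
      obtain ⟨h1, h2⟩ := Finset.mem_filter.1 hq
      exact Finset.mem_filter.2 ⟨h1, hcd.trans h2⟩
    exact Set.subset_iUnion₂ (s := fun (q : ℤ × ℤ) (_ : q ∈ G c) => dy q.1 q.2) q hqc
  -- Step 1 : rewrite the left-hand side
  have hsq : ∀ q ∈ F, a q ^ 2
      = ∑ i ∈ Finset.range m, if t (i+1) ≤ a q then t (i+1)^2 - t i^2 else 0 := by
    intro q hq
    obtain ⟨k, hk, hak⟩ := hsurj q hq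
    have hcond : ∀ i ∈ Finset.range m,
        (if t (i+1) ≤ a q then t (i+1)^2 - t i^2 else 0)
          = (if i < k then t (i+1)^2 - t i^2 else 0) := by
      intro i hi
      have him := Finset.mem_range.1 hi
      have hiff : (t (i+1) ≤ a q) ↔ i < k := by
        rw [← hak]
        constructor
        · intro hle
          by_contra hik
          push_neg at hik
          have : t k < t (i+1) := hstrict k (i+1) (by omega) (by omega)
          linarith
        · intro hik
          exact hmono (i+1) k hik hk
      exact if_congr hiff rfl rfl
    rw [Finset.sum_congr rfl hcond, ← Finset.sum_filter]
    have hfilter : (Finset.range m).filter (· < k) = Finset.range k := by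
      ext i
      simp only [Finset.mem_filter, Finset.mem_range]
      omega
    rw [hfilter, Finset.sum_range_sub (fun i => t i ^ 2), ht0, hak]
    ring
  have hLHS : ∑ q ∈ F, (ω (dy q.1 q.2)).toReal * a q ^ 2
      = ∑ i ∈ Finset.range m, (t (i+1)^2 - t i^2) * (∑ q ∈ G (t (i+1)), (ω (dy q.1 q.2)).toReal) := by
    calc ∑ q ∈ F, (ω (dy q.1 q.2)).toReal * a q ^ 2
        = ∑ q ∈ F, ∑ i ∈ Finset.range m,
            (if t (i+1) ≤ a q then (t (i+1)^2 - t i^2) * (ω (dy q.1 q.2)).toReal else 0) := by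
          apply Finset.sum_congr rfl
          intro q hq
          rw [hsq q hq, Finset.mul_sum]
          apply Finset.sum_congr rfl
          intro i _
          rw [mul_ite, mul_zero, mul_comm]
      _ = ∑ i ∈ Finset.range m, ∑ q ∈ F,
            (if t (i+1) ≤ a q then (t (i+1)^2 - t i^2) * (ω (dy q.1 q.2)).toReal else 0) :=
          Finset.sum_comm
      _ = ∑ i ∈ Finset.range m, (t (i+1)^2 - t i^2) * (∑ q ∈ G (t (i+1)), (ω (dy q.1 q.2)).toReal) := by
          apply Finset.sum_congr rfl
          intro i _
          rw [← Finset.sum_filter, Finset.mul_sum]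
  -- Step 2 : the function M and its properties
  set M : ℝ → ℝ := fun x => ∑ i ∈ Finset.range m,
      if x ∈ U (t (i+1)) then t (i+1) - t i else 0 with hM
  have hMsq : ∀ x, M x ^ 2 = ∑ i ∈ Finset.range m,
      if x ∈ U (t (i+1)) then t (i+1)^2 - t i^2 else 0 := by
    intro x
    apply telescope_sq t ht0 m (fun i => x ∈ U (t (i+1)))
    intro i hi hxi
    exact hUanti (t (i+1)) (t (i+2)) (hmono (i+1) (i+2) (by omega) (by omega)) hxi
  have hint_ind : ∀ (c : ℝ) (v : ℝ), Integrable ((U c).indicator (fun _ => v)) ω := by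
    intro c v
    exact (integrable_indicator_iff (hUmeas c)).2 (integrableOn_const (hUfin c))
  set B : ℝ := ∑ i ∈ Finset.range m, (t (i+1)^2 - t i^2) * (ω (U (t (i+1)))).toReal with hB
  have hM2 : ∫ x, M x ^ 2 ∂ω = B := by
    have e1 : ∫ x, M x ^ 2 ∂ω = ∫ x, ∑ i ∈ Finset.range m,
        (U (t (i+1))).indicator (fun _ => t (i+1)^2 - t i^2) x ∂ω := by
      congr 1
      funext x
      rw [hMsq x]
      apply Finset.sum_congr rfl
      intro i _
      exact ite_eq_ind _ _ _
    rw [e1, integral_finset_sum _ (fun i _ => hint_ind _ _)]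
    apply Finset.sum_congr rfl
    intro i _
    rw [integral_indicator_const _ (hUmeas _)]
    simp [mul_comm, Measure.real]
  have hMnn : ∀ x, 0 ≤ M x := by
    intro x
    apply Finset.sum_nonneg
    intro i hi
    have him := Finset.mem_range.1 hi
    have : 0 ≤ t (i+1) - t i := sub_nonneg.2 (hmono i (i+1) (by omega) (by omega))
    split <;> simp [this]
  have hB0 : 0 ≤ B := by
    rw [← hM2]
    exact integral_nonneg fun x => sq_nonneg _
  have hMmem : MemLp M 2 ω := by
    have : MemLp (fun x => ∑ i ∈ Finset.range m,
        (U (t (i+1))).indicator (fun _ => t (i+1) - t i) x) 2 ω := by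
      apply memLp_finset_sum
      intro i _
      exact memLp_indicator_const 2 (hUmeas _) _ (Or.inr (hUfin _))
    have h2 : M = fun x => ∑ i ∈ Finset.range m,
        (U (t (i+1))).indicator (fun _ => t (i+1) - t i) x := by
      funext x
      show (∑ i ∈ Finset.range m, if x ∈ U (t (i+1)) then t (i+1) - t i else 0) = _
      exact Finset.sum_congr rfl (fun i _ => ite_eq_ind _ _ _)
    rw [h2]
    exact this
  have hgabs : MemLp (fun x => |g x|) 2 ω := by
    simpa [Real.norm_eq_abs] using hg.norm
  -- Cauchy–Schwarz
  have hCS : ∫ x, |g x| * M x ∂ω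
      ≤ Real.sqrt (∫ x, g x ^ 2 ∂ω) * Real.sqrt (∫ x, M x ^ 2 ∂ω) := by
    have hconj : Real.HolderConjugate 2 2 := Real.holderConjugate_iff.2 ⟨by norm_num, by norm_num⟩
    have h2 : ENNReal.ofReal (2:ℝ) = 2 := by norm_num
    have := integral_mul_le_Lp_mul_Lq_of_nonneg hconj
      (Filter.Eventually.of_forall fun x => abs_nonneg (g x))
      (Filter.Eventually.of_forall fun x => hMnn x)
      (h2 ▸ hgabs) (h2 ▸ hMmem)
    have e1 : ∫ x, |g x| ^ (2:ℝ) ∂ω = ∫ x, g x ^ 2 ∂ω := by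
      congr 1
      funext x
      rw [Real.rpow_two, sq_abs]
    have e2 : ∫ x, M x ^ (2:ℝ) ∂ω = ∫ x, M x ^ 2 ∂ω := by
      congr 1
      funext x
      rw [Real.rpow_two]
    rw [e1, e2] at this
    rw [Real.sqrt_eq_rpow, Real.sqrt_eq_rpow]
    exact this
  have hMg : ∫ x, |g x| * M x ∂ω = ∑ i ∈ Finset.range m,
      (t (i+1) - t i) * ∫ x in U (t (i+1)), |g x| ∂ω := by
    have e1 : ∫ x, |g x| * M x ∂ω = ∫ x, ∑ i ∈ Finset.range m,
        (U (t (i+1))).indicator (fun y => (t (i+1) - t i) * |g y|) x ∂ω := by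
      congr 1
      funext x
      rw [hM, Finset.mul_sum]
      apply Finset.sum_congr rfl
      intro i _
      exact mul_ite_eq_ind (U (t (i+1))) (t (i+1) - t i) (fun y => |g y|) x
    rw [e1, integral_finset_sum]
    · apply Finset.sum_congr rfl
      intro i _
      rw [integral_indicator (hUmeas _), integral_const_mul]
    · intro i _
      exact (integrable_indicator_iff (hUmeas _)).2
        ((abs_integrableOn hg (hUmeas _) (hUfin _)).const_mul _)
  -- chain of inequalities for B
  have hBle : B ≤ 2 * ∫ x, |g x| * M x ∂ω := by
    rw [hMg, hB, Finset.mul_sum]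
    apply Finset.sum_le_sum
    intro i hi
    have him := Finset.mem_range.1 hi
    have hs0 : 0 ≤ t i := htnn i (by omega)
    have hts : t i ≤ t (i+1) := hmono i (i+1) (by omega) (by omega)
    have hW0 : (0:ℝ) ≤ (ω (U (t (i+1)))).toReal := ENNReal.toReal_nonneg
    have hC2 := (hCB (t (i+1))).2
    nlinarith [mul_le_mul_of_nonneg_left hC2 (sub_nonneg.2 hts),
      mul_nonneg (mul_nonneg (sub_nonneg.2 hts) (sub_nonneg.2 hts)) hW0]
  have hBfin : B ≤ 4 * ∫ x, g x ^ 2 ∂ω := by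
    have h1 : B ≤ 2 * (Real.sqrt (∫ x, g x ^ 2 ∂ω) * Real.sqrt B) := by
      have := hCS
      rw [hM2] at this
      linarith [hBle]
    nlinarith [Real.sq_sqrt hI0, Real.sq_sqrt hB0, Real.sqrt_nonneg (∫ x, g x ^ 2 ∂ω),
      Real.sqrt_nonneg B, sq_nonneg (Real.sqrt B - 2 * Real.sqrt (∫ x, g x ^ 2 ∂ω))]
  -- conclusion
  calc ∑ q ∈ F, (ω (dy q.1 q.2)).toReal * a q ^ 2
      = ∑ i ∈ Finset.range m, (t (i+1)^2 - t i^2)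
          * (∑ q ∈ G (t (i+1)), (ω (dy q.1 q.2)).toReal) := hLHS
    _ ≤ ∑ i ∈ Finset.range m, (t (i+1)^2 - t i^2) * (Λ * (ω (U (t (i+1)))).toReal) := by
        apply Finset.sum_le_sum
        intro i hi
        have him := Finset.mem_range.1 hi
        have hd : 0 ≤ t (i+1)^2 - t i^2 := by
          have hs0 : 0 ≤ t i := htnn i (by omega)
          have hts : t i ≤ t (i+1) := hmono i (i+1) (by omega) (by omega)
          nlinarith
        exact mul_le_mul_of_nonneg_left (hCB (t (i+1))).1 hd
    _ = Λ * B := by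
        rw [hB, Finset.mul_sum]
        apply Finset.sum_congr rfl
        intro i _
        ring
    _ ≤ Λ * (4 * ∫ x, g x ^ 2 ∂ω) := mul_le_mul_of_nonneg_left hBfin hΛ.le
    _ = 4 * Λ * ∫ x, g x ^ 2 ∂ω := by ring

/-- Dyadic Carleson embedding theorem with respect to a measure (stated for arbitrary
finite partial sums of the sum of nonnegative terms). -/
theorem carleson_embedding (ω : Measure ℝ) [IsLocallyFiniteMeasure ω] (Λ : ℝ) (hΛ : 0 < Λ)
    (S : Set (ℤ × ℤ))
    (hpack : ∀ k m : ℤ,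
      ∑' q : {q : ℤ × ℤ // q ∈ S ∧ dy q.1 q.2 ⊆ dy k m},
        ω (dy (q : ℤ × ℤ).1 (q : ℤ × ℤ).2) ≤ ENNReal.ofReal Λ * ω (dy k m))
    (g : ℝ → ℝ) (hg : MemLp g 2 ω) :
    ∀ s : Finset (ℤ × ℤ),
      ∑ q ∈ s,
        Set.indicator {q : ℤ × ℤ | q ∈ S ∧ ω (dy q.1 q.2) ≠ 0}
          (fun q => (ω (dy q.1 q.2)).toReal * (avg ω (dy q.1 q.2) fun x => |g x|) ^ 2) q
      ≤ 4 * Λ * ∫ x, g x ^ 2 ∂ω := by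
  intro s
  classical
  have hrw : ∑ q ∈ s,
      Set.indicator {q : ℤ × ℤ | q ∈ S ∧ ω (dy q.1 q.2) ≠ 0}
        (fun q => (ω (dy q.1 q.2)).toReal * (avg ω (dy q.1 q.2) fun x => |g x|) ^ 2) q
      = ∑ q ∈ s.filter (fun q => q ∈ S ∧ ω (dy q.1 q.2) ≠ 0),
          (ω (dy q.1 q.2)).toReal * (avg ω (dy q.1 q.2) fun x => |g x|) ^ 2 := by
    rw [Finset.sum_filter]
    apply Finset.sum_congr rfl
    intro q _
    by_cases h : q ∈ S ∧ ω (dy q.1 q.2) ≠ 0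
    · rw [Set.indicator_of_mem
        (show q ∈ {q : ℤ × ℤ | q ∈ S ∧ ω (dy q.1 q.2) ≠ 0} from h), if_pos h]
    · rw [Set.indicator_of_notMem
        (show q ∉ {q : ℤ × ℤ | q ∈ S ∧ ω (dy q.1 q.2) ≠ 0} from h), if_neg h]
  rw [hrw]
  exact carleson_core ω Λ hΛ S hpack g hg _
    (fun q hq => ((Finset.mem_filter.1 hq).2).1)
    (fun q hq => ((Finset.mem_filter.1 hq).2).2)

end
end
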